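/- Fix k ≥ 2 and let (b_n) be the strategy constructed by the k-parallel Universal Portfolio algorithm with μ the uniform density on B^m. Then for every infinite sequence of return vectors with positive entries, limsup_{n→∞} max_{b ∈ B^m} (W_n(b) − W_n(b_n)) ≤ 0; that is, the constructed strategy asymptotically matches or exceeds the growth rate of the best constant strategy in hindsight. -/

import Mathlib

open MeasureTheory Filter

noncomputable section

/-- Scalar product of a portfolio with a return vector. -/
def dot {m : ℕ} (b x : Fin m → ℝ) : ℝ := ∑ j, b j * x j

/-- The portfolio simplex `B^m`. -/
def simplex (m : ℕ) : Set (Fin m → ℝ) := stdSimplex ℝ (Fin m)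

/-- The uniform probability measure on the simplex `B^m`, i.e. normalized
`(m-1)`-dimensional Hausdorff measure restricted to the simplex. -/
def uniformSimplex (m : ℕ) : Measure (Fin m → ℝ) :=
  (μH[(m : ℝ) - 1] (simplex m))⁻¹ • (μH[(m : ℝ) - 1]).restrict (simplex m)

/-- The `k`-parallel Universal Portfolio strategy with measure `μ` on the simplex:
for times `n = k*t + i` with `1 ≤ i ≤ k` and `t = 0` it selects the uniform portfolio
`(1/m, ..., 1/m)`, and for `t ≥ 1` it applies the Universal Portfolio rule to the
subsequence `x_i, x_{k+i}, ..., x_{k(t-1)+i}`. -/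
def kPUP {m : ℕ} (k : ℕ) (μ : Measure (Fin m → ℝ)) (x : ℕ → Fin m → ℝ) (n : ℕ) : Fin m → ℝ :=
  if (n - 1) / k = 0 then fun _ => (m : ℝ)⁻¹
  else fun j =>
    (∫ b in simplex m,
        b j * ∏ s ∈ Finset.range ((n - 1) / k), dot b (x (k * s + (n - 1) % k + 1)) ∂μ) /
    (∫ b in simplex m,
        ∏ s ∈ Finset.range ((n - 1) / k), dot b (x (k * s + (n - 1) % k + 1)) ∂μ)


open scoped NNReal ENNReal

-- projection is 1-Lipschitz
lemma lip_proj (m' : ℕ) : LipschitzWith 1 (fun (b : Fin (m'+1) → ℝ) (i : Fin m') => b i.castSucc) := by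
  apply LipschitzWith.mk_one
  intro x y
  rw [dist_pi_le_iff dist_nonneg]
  intro i
  exact dist_le_pi_dist x y i.castSucc

def emb (m' : ℕ) : (Fin m' → ℝ) → (Fin (m'+1) → ℝ) :=
  fun y => Fin.snoc y (1 - ∑ i, y i)

lemma lip_emb (m' : ℕ) : LipschitzWith (m' + 1 : ℝ≥0) (emb m') := by
  apply LipschitzWith.of_dist_le_mul
  intro y y'
  rw [dist_pi_le_iff (by positivity)]
  intro j
  induction j using Fin.lastCases with
  | last =>
      simp only [emb, Fin.snoc_last, Real.dist_eq]
      have h1 : |(1 - ∑ i, y i) - (1 - ∑ i, y' i)| = |∑ i, (y' i - y i)| := by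
        rw [Finset.sum_sub_distrib]; ring_nf
      rw [h1]
      calc |∑ i, (y' i - y i)| ≤ ∑ i, |y' i - y i| := Finset.abs_sum_le_sum_abs _ _
        _ ≤ ∑ _i : Fin m', dist y y' := by
            refine Finset.sum_le_sum fun i _ => ?_
            rw [abs_sub_comm]
            exact dist_le_pi_dist y y' i
        _ = (m' : ℝ) * dist y y' := by rw [Finset.sum_const]; simp [mul_comm]
        _ ≤ ((m' : ℝ≥0) + 1 : ℝ≥0) * dist y y' := by
            push_cast
            nlinarith [dist_nonneg (x := y) (y := y')]
  | cast i =>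
      simp only [emb, Fin.snoc_castSucc]
      calc dist (y i) (y' i) ≤ dist y y' := dist_le_pi_dist y y' i
        _ ≤ ((m' : ℝ≥0) + 1 : ℝ≥0) * dist y y' := by
            push_cast
            nlinarith [dist_nonneg (x := y) (y := y')]

def halfSpace (m' : ℕ) : Set (Fin m' → ℝ) := {y | (∀ i, 0 ≤ y i) ∧ ∑ i, y i ≤ 1}

lemma proj_image (m' : ℕ) :
    (fun (b : Fin (m'+1) → ℝ) (i : Fin m') => b i.castSucc) '' simplex (m'+1) = halfSpace m' := by
  ext y
  constructor
  · rintro ⟨b, ⟨hb0, hb1⟩, rfl⟩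
    refine ⟨fun i => hb0 _, ?_⟩
    calc ∑ i : Fin m', b i.castSucc ≤ ∑ i : Fin m', b i.castSucc + b (Fin.last m') := by
          nlinarith [hb0 (Fin.last m')]
      _ = ∑ i, b i := (Fin.sum_univ_castSucc b).symm
      _ ≤ 1 := le_of_eq hb1
  · rintro ⟨h0, h1⟩
    refine ⟨emb m' y, ⟨?_, ?_⟩, ?_⟩
    · intro j
      induction j using Fin.lastCases with
      | last => simpa [emb] using h1
      | cast i => simpa [emb] using h0 i
    · rw [Fin.sum_univ_castSucc]
      simp [emb]
    · funext i
      simp [emb]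

lemma simplex_subset_emb_image (m' : ℕ) : simplex (m'+1) ⊆ emb m' '' halfSpace m' := by
  rintro b ⟨hb0, hb1⟩
  refine ⟨fun i => b i.castSucc, ?_, ?_⟩
  · refine ⟨fun i => hb0 _, ?_⟩
    calc ∑ i : Fin m', b i.castSucc ≤ ∑ i : Fin m', b i.castSucc + b (Fin.last m') := by
          nlinarith [hb0 (Fin.last m')]
      _ = ∑ i, b i := (Fin.sum_univ_castSucc b).symm
      _ ≤ 1 := le_of_eq hb1
  · funext j
    induction j using Fin.lastCases with
    | last =>
        simp only [emb, Fin.snoc_last]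
        have h2 := Fin.sum_univ_castSucc b
        rw [hb1] at h2
        linarith [h2]
    | cast i => simp [emb]

lemma hausdorff_halfSpace_pos (m' : ℕ) : 0 < μH[(m' : ℝ)] (halfSpace m') := by
  have hvol : (μH[(m' : ℝ)] : Measure (Fin m' → ℝ)) = volume := by
    have := hausdorffMeasure_pi_real (ι := Fin m')
    simpa using this
  rw [hvol]
  have hsub : (Set.univ.pi fun _ : Fin m' => Set.Ioo (0:ℝ) ((m' : ℝ) + 1)⁻¹) ⊆ halfSpace m' := by
    intro y hy
    simp only [Set.mem_pi, Set.mem_univ, Set.mem_Ioo, forall_true_left] at hy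
    refine ⟨fun i => (hy i).1.le, ?_⟩
    calc ∑ i, y i ≤ ∑ _i : Fin m', ((m':ℝ)+1)⁻¹ :=
          Finset.sum_le_sum fun i _ => (hy i).2.le
      _ = (m' : ℝ) * ((m':ℝ)+1)⁻¹ := by rw [Finset.sum_const]; simp [mul_comm]
      _ ≤ 1 := by
          rw [mul_inv_le_iff₀ (by positivity)]
          linarith
  refine lt_of_lt_of_le ?_ (measure_mono hsub)
  rw [volume_pi_pi]
  simp only [Real.volume_Ioo, sub_zero]
  rw [Finset.prod_const]
  positivity

lemma hausdorff_simplex_pos (m' : ℕ) : 0 < μH[((m'+1 : ℕ) : ℝ) - 1] (simplex (m'+1)) := by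
  have hd : ((m'+1 : ℕ) : ℝ) - 1 = (m' : ℝ) := by push_cast; ring
  rw [hd]
  by_contra h
  push_neg at h
  have h0 : μH[(m' : ℝ)] (simplex (m'+1)) = 0 := le_antisymm h zero_le
  have := (lip_proj m').hausdorffMeasure_image_le (by positivity : (0:ℝ) ≤ (m' : ℝ)) (simplex (m'+1))
  rw [proj_image, h0] at this
  simp only [mul_zero] at this
  exact absurd (le_antisymm this zero_le) (hausdorff_halfSpace_pos m').ne'

lemma hausdorff_simplex_lt_top (m' : ℕ) : μH[((m'+1 : ℕ) : ℝ) - 1] (simplex (m'+1)) < ⊤ := by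
  have hd : ((m'+1 : ℕ) : ℝ) - 1 = (m' : ℝ) := by push_cast; ring
  rw [hd]
  have h1 : μH[(m' : ℝ)] (simplex (m'+1)) ≤ μH[(m' : ℝ)] (emb m' '' halfSpace m') :=
    measure_mono (simplex_subset_emb_image m')
  have h2 := (lip_emb m').hausdorffMeasure_image_le (by positivity : (0:ℝ) ≤ (m' : ℝ)) (halfSpace m')
  have hvol : (μH[(m' : ℝ)] : Measure (Fin m' → ℝ)) = volume := by
    have := hausdorffMeasure_pi_real (ι := Fin m')
    simpa using this
  have h3 : μH[(m' : ℝ)] (halfSpace m') ≤ 1 := by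
    rw [hvol]
    have hsub : halfSpace m' ⊆ Set.univ.pi fun _ : Fin m' => Set.Icc (0:ℝ) 1 := by
      intro y ⟨h0, h1⟩
      intro i _
      refine ⟨h0 i, ?_⟩
      calc y i ≤ ∑ j, y j := Finset.single_le_sum (fun j _ => h0 j) (Finset.mem_univ i)
        _ ≤ 1 := h1
    refine le_trans (measure_mono hsub) ?_
    rw [volume_pi_pi]
    simp
  calc μH[(m' : ℝ)] (simplex (m'+1)) ≤ ((m' + 1 : ℝ≥0) : ℝ≥0∞) ^ (m' : ℝ) * μH[(m' : ℝ)] (halfSpace m') := le_trans h1 h2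
    _ ≤ ((m' + 1 : ℝ≥0) : ℝ≥0∞) ^ (m' : ℝ) * 1 := by gcongr
    _ < ⊤ := by
        rw [mul_one]
        exact ENNReal.rpow_lt_top_of_nonneg (by positivity) (by simp)

lemma simplex_isCompact (m : ℕ) : IsCompact (simplex m) := isCompact_stdSimplex _ _

lemma simplex_measurableSet (m : ℕ) : MeasurableSet (simplex m) :=
  (isClosed_stdSimplex ℝ (Fin m)).measurableSet

lemma unif_mem (m : ℕ) (hm : 1 ≤ m) : (fun _ : Fin m => (m : ℝ)⁻¹) ∈ simplex m := by
  constructor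
  · intro i; positivity
  · rw [Finset.sum_const]
    simp only [Finset.card_univ, Fintype.card_fin, nsmul_eq_mul]
    rw [mul_inv_cancel₀ (by exact_mod_cast (by omega : m ≠ 0))]

lemma uS_restrict (m' : ℕ) :
    (uniformSimplex (m'+1)).restrict (simplex (m'+1)) = uniformSimplex (m'+1) := by
  unfold uniformSimplex
  rw [Measure.restrict_smul, Measure.restrict_restrict (simplex_measurableSet _), Set.inter_self]

lemma uS_apply_simplex (m' : ℕ) : uniformSimplex (m'+1) (simplex (m'+1)) = 1 := by
  unfold uniformSimplex
  rw [Measure.smul_apply, Measure.restrict_apply (simplex_measurableSet _), Set.inter_self,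
    smul_eq_mul, ENNReal.inv_mul_cancel (hausdorff_simplex_pos m').ne' (hausdorff_simplex_lt_top m').ne]

lemma uS_prob (m' : ℕ) : IsProbabilityMeasure (uniformSimplex (m'+1)) := by
  constructor
  unfold uniformSimplex
  rw [Measure.smul_apply, Measure.restrict_apply MeasurableSet.univ, Set.univ_inter,
    smul_eq_mul, ENNReal.inv_mul_cancel (hausdorff_simplex_pos m').ne' (hausdorff_simplex_lt_top m').ne]

lemma uS_homothety (m' : ℕ) {α : ℝ} (hα : 0 < α) (hα1 : α ≤ 1) {b₀ : Fin (m'+1) → ℝ}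
    (hb₀ : b₀ ∈ simplex (m'+1)) :
    uniformSimplex (m'+1) (AffineMap.homothety b₀ α '' simplex (m'+1))
      = ENNReal.ofReal (α ^ (((m'+1 : ℕ) : ℝ) - 1)) := by
  set d : ℝ := ((m'+1 : ℕ) : ℝ) - 1 with hd
  have hd0 : 0 ≤ d := by rw [hd]; push_cast; linarith [Nat.cast_nonneg (α := ℝ) m']
  have himg := hausdorffMeasure_homothety_image (𝕜 := ℝ) hd0 b₀ (ne_of_gt hα) (simplex (m'+1))
  have hsub : AffineMap.homothety b₀ α '' simplex (m'+1) ⊆ Set.univ := Set.subset_univ _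
  unfold uniformSimplex
  rw [Measure.smul_apply, Measure.restrict_apply']
  swap
  · exact simplex_measurableSet _
  have hinter : AffineMap.homothety b₀ α '' simplex (m'+1) ∩ simplex (m'+1)
      = AffineMap.homothety b₀ α '' simplex (m'+1) := by
    refine Set.inter_eq_self_of_subset_left ?_
    rintro _ ⟨b, hb, rfl⟩
    have : AffineMap.homothety b₀ α b = α • b + (1 - α) • b₀ := by
      simp [AffineMap.homothety_apply, vsub_eq_sub, vadd_eq_add, smul_sub]
      module
    rw [this]
    exact (convex_stdSimplex ℝ (Fin (m'+1))) hb hb₀ hα.le (by linarith) (by ring)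
  rw [hinter, himg, smul_eq_mul]
  have hcoe : ((‖α‖₊ ^ d : ℝ≥0) : ℝ≥0∞) = ENNReal.ofReal (α ^ d) := by
    rw [ENNReal.coe_rpow_of_nonneg _ hd0, ← enorm_eq_nnnorm, Real.enorm_eq_ofReal hα.le,
      ← ENNReal.ofReal_rpow_of_pos hα]
  rw [ENNReal.smul_def, smul_eq_mul, ← mul_assoc, mul_comm _ ((‖α‖₊ ^ d : ℝ≥0) : ℝ≥0∞), mul_assoc,
    ENNReal.inv_mul_cancel (hausdorff_simplex_pos m').ne' (hausdorff_simplex_lt_top m').ne,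
    mul_one, hcoe]

lemma dot_nonneg {m : ℕ} {b x : Fin m → ℝ} (hb : b ∈ simplex m) (hx : ∀ j, 0 ≤ x j) :
    0 ≤ dot b x :=
  Finset.sum_nonneg fun j _ => mul_nonneg (hb.1 j) (hx j)

lemma dot_pos {m : ℕ} {b x : Fin m → ℝ} (hb : b ∈ simplex m) (hx : ∀ j, 0 < x j) :
    0 < dot b x := by
  obtain ⟨j, hj⟩ : ∃ j, 0 < b j := by
    by_contra h
    push_neg at h
    have : ∑ j, b j = 0 := Finset.sum_eq_zero fun j _ => le_antisymm (h j) (hb.1 j)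
    rw [hb.2] at this; norm_num at this
  exact Finset.sum_pos' (fun j _ => mul_nonneg (hb.1 j) (hx j).le)
    ⟨j, Finset.mem_univ j, mul_pos hj (hx j)⟩

lemma coord_le_one {m : ℕ} {b : Fin m → ℝ} (hb : b ∈ simplex m) (j : Fin m) : b j ≤ 1 := by
  calc b j ≤ ∑ i, b i := Finset.single_le_sum (fun i _ => hb.1 i) (Finset.mem_univ j)
    _ = 1 := hb.2

lemma dot_le_sum {m : ℕ} {b x : Fin m → ℝ} (hb : b ∈ simplex m) (hx : ∀ j, 0 ≤ x j) :
    dot b x ≤ ∑ j, x j :=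
  Finset.sum_le_sum fun j _ => by
    calc b j * x j ≤ 1 * x j := mul_le_mul_of_nonneg_right (coord_le_one hb j) (hx j)
      _ = x j := one_mul _

lemma dot_unif {m : ℕ} (x : Fin m → ℝ) :
    dot (fun _ => (m : ℝ)⁻¹) x = (m : ℝ)⁻¹ * ∑ j, x j := by
  rw [dot, Finset.mul_sum]

lemma dot_continuous {m : ℕ} (x : Fin m → ℝ) : Continuous (fun b : Fin m → ℝ => dot b x) := by
  unfold dot
  exact continuous_finset_sum _ fun j _ => (continuous_apply j).mul continuous_const

lemma dot_combo {m : ℕ} (α β : ℝ) (b b' x : Fin m → ℝ) :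
    dot (α • b + β • b') x = α * dot b x + β * dot b' x := by
  unfold dot
  rw [Finset.mul_sum, Finset.mul_sum, ← Finset.sum_add_distrib]
  refine Finset.sum_congr rfl fun j _ => ?_
  simp [Pi.add_apply, Pi.smul_apply, smul_eq_mul]
  ring

-- integration helpers
lemma integrableOn_simplex {m' : ℕ} {f : (Fin (m'+1) → ℝ) → ℝ} (hf : Continuous f) :
    IntegrableOn f (simplex (m'+1)) (uniformSimplex (m'+1)) := by
  have := uS_prob m'
  exact hf.continuousOn.integrableOn_compact (simplex_isCompact _)

lemma setIntegral_simplex_pos {m' : ℕ} {f : (Fin (m'+1) → ℝ) → ℝ} (hf : Continuous f)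
    (hpos : ∀ b ∈ simplex (m'+1), 0 < f b) :
    0 < ∫ b in simplex (m'+1), f b ∂(uniformSimplex (m'+1)) := by
  obtain ⟨b₀, hb₀, hmin⟩ := (simplex_isCompact (m'+1)).exists_isMinOn
    ⟨_, unif_mem (m'+1) (by omega)⟩ hf.continuousOn
  have hb : 0 < f b₀ := hpos b₀ hb₀
  have h := setIntegral_ge_of_const_le (μ := uniformSimplex (m'+1)) (c := f b₀)
    (simplex_measurableSet (m'+1))
    (by rw [uS_apply_simplex]; exact ENNReal.one_ne_top)
    (fun b hb => hmin hb) (integrableOn_simplex hf)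
  rw [measureReal_def, uS_apply_simplex] at h
  simp only [ENNReal.toReal_one, mul_one, smul_eq_mul, one_mul] at h
  linarith

lemma setIntegral_simplex_le {m' : ℕ} {f : (Fin (m'+1) → ℝ) → ℝ} (hf : Continuous f)
    {C : ℝ} (hC : ∀ b ∈ simplex (m'+1), f b ≤ C) :
    ∫ b in simplex (m'+1), f b ∂(uniformSimplex (m'+1)) ≤ C := by
  have h1 : ∫ b in simplex (m'+1), f b ∂(uniformSimplex (m'+1))
      ≤ ∫ _b in simplex (m'+1), C ∂(uniformSimplex (m'+1)) := by
    refine setIntegral_mono_on (integrableOn_simplex hf) ?_ (simplex_measurableSet _) hC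
    exact integrableOn_const (by rw [uS_apply_simplex]; exact ENNReal.one_ne_top)
  rw [setIntegral_const, measureReal_def, uS_apply_simplex] at h1
  simpa using h1

-- reindexing along residue classes mod k
lemma lt_count_iff {k r N t : ℕ} (hk : 0 < k) (hr : r < k) :
    t < (N + k - 1 - r) / k ↔ k * t + r < N := by
  rw [Nat.lt_iff_add_one_le, Nat.le_div_iff_mul_le hk, add_mul, one_mul, mul_comm k t]
  generalize t * k = p
  omega

@[to_additive]
lemma prod_range_mod {M : Type*} [CommMonoid M] {k : ℕ} (hk : 0 < k) (f : ℕ → M) (N : ℕ) :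
    ∏ i ∈ Finset.range N, f i
      = ∏ r ∈ Finset.range k, ∏ t ∈ Finset.range ((N + k - 1 - r) / k), f (k * t + r) := by
  rw [Finset.prod_sigma']
  refine Finset.prod_bij' (fun i _ => ⟨i % k, i / k⟩) (fun p _ => k * p.2 + p.1) ?_ ?_ ?_ ?_ ?_
  · intro i hi
    rw [Finset.mem_sigma]
    refine ⟨Finset.mem_range.mpr (Nat.mod_lt _ hk), Finset.mem_range.mpr ?_⟩
    rw [lt_count_iff hk (Nat.mod_lt _ hk), Nat.div_add_mod]
    exact Finset.mem_range.mp hi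
  · rintro ⟨r, t⟩ hp
    rw [Finset.mem_sigma, Finset.mem_range, Finset.mem_range] at hp
    exact Finset.mem_range.mpr ((lt_count_iff hk hp.1).mp hp.2)
  · intro i hi
    simp only
    exact Nat.div_add_mod i k
  · rintro ⟨r, t⟩ hp
    rw [Finset.mem_sigma, Finset.mem_range, Finset.mem_range] at hp
    have h1 : (k * t + r) % k = r := by
      rw [Nat.mul_add_mod, Nat.mod_eq_of_lt hp.1]
    have h2 : (k * t + r) / k = t := by
      rw [Nat.mul_add_div hk, Nat.div_eq_of_lt hp.1, add_zero]
    simp [h1, h2]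
  · intro i hi
    simp only
    congr 1
    exact (Nat.div_add_mod i k).symm

section Core

variable {m' : ℕ} (k : ℕ) (x : ℕ → Fin (m'+1) → ℝ)

def Pfun (r t : ℕ) (b : Fin (m'+1) → ℝ) : ℝ :=
  ∏ s ∈ Finset.range t, dot b (x (k * s + r + 1))

def Ffun (r t : ℕ) : ℝ :=
  ∫ b in simplex (m'+1), Pfun k x r t b ∂(uniformSimplex (m'+1))

variable {k x}

lemma Pfun_continuous (r t : ℕ) : Continuous (Pfun k x r t) :=
  continuous_finset_prod _ fun s _ => dot_continuous _

lemma Pfun_pos (hx : ∀ i, 1 ≤ i → ∀ j, 0 < x i j) (r t : ℕ) {b : Fin (m'+1) → ℝ}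
    (hb : b ∈ simplex (m'+1)) : 0 < Pfun k x r t b :=
  Finset.prod_pos fun s _ => dot_pos hb (fun j => hx _ (by omega) j)

lemma Pfun_succ (r t : ℕ) (b : Fin (m'+1) → ℝ) :
    Pfun k x r (t+1) b = Pfun k x r t b * dot b (x (k * t + r + 1)) :=
  Finset.prod_range_succ _ _

lemma Ffun_pos (hx : ∀ i, 1 ≤ i → ∀ j, 0 < x i j) (r t : ℕ) : 0 < Ffun k x r t :=
  setIntegral_simplex_pos (Pfun_continuous r t) fun b hb => Pfun_pos hx r t hb

-- evaluation of the strategy at time k*t+r+1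
lemma kPUP_arith {r t : ℕ} (hk : 0 < k) (hr : r < k) :
    (k * t + r + 1 - 1) / k = t ∧ (k * t + r + 1 - 1) % k = r := by
  constructor
  · rw [Nat.add_sub_cancel, Nat.mul_add_div hk, Nat.div_eq_of_lt hr, add_zero]
  · rw [Nat.add_sub_cancel, Nat.mul_add_mod, Nat.mod_eq_of_lt hr]

lemma kPUP_zero {r : ℕ} (hk : 0 < k) (hr : r < k) :
    kPUP k (uniformSimplex (m'+1)) x (k * 0 + r + 1) = fun _ => ((m'+1 : ℕ) : ℝ)⁻¹ := by
  unfold kPUP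
  rw [if_pos]
  exact (kPUP_arith hk hr).1

lemma kPUP_succ_dot (hx : ∀ i, 1 ≤ i → ∀ j, 0 < x i j) {r t : ℕ} (hk : 0 < k) (hr : r < k)
    (ht : t ≠ 0) :
    dot (kPUP k (uniformSimplex (m'+1)) x (k * t + r + 1)) (x (k * t + r + 1))
      = Ffun k x r (t+1) / Ffun k x r t := by
  obtain ⟨h1, h2⟩ := kPUP_arith (t := t) hk hr
  unfold kPUP
  rw [if_neg (by rw [h1]; exact ht), h1, h2]
  have hint : ∀ j : Fin (m'+1), IntegrableOn (fun b => b j * Pfun k x r t b)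
      (simplex (m'+1)) (uniformSimplex (m'+1)) :=
    fun j => integrableOn_simplex ((continuous_apply j).mul (Pfun_continuous r t))
  have key : Ffun k x r (t+1)
      = ∑ j, (∫ b in simplex (m'+1), b j * Pfun k x r t b ∂(uniformSimplex (m'+1)))
          * x (k * t + r + 1) j := by
    have : ∀ b, Pfun k x r (t+1) b = ∑ j, (b j * Pfun k x r t b) * x (k * t + r + 1) j := by
      intro b
      rw [Pfun_succ]
      unfold dot
      rw [Finset.mul_sum]
      exact Finset.sum_congr rfl fun j _ => by ring
    unfold Ffun
    rw [integral_congr_ae (Filter.Eventually.of_forall fun b => this b)]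
    rw [integral_finset_sum _ fun j _ => ((hint j).mul_const _)]
    exact Finset.sum_congr rfl fun j _ => integral_mul_const _ _
  rw [key]
  unfold dot
  simp only [div_mul_eq_mul_div]
  rw [← Finset.sum_div]
  rfl

-- telescoping over one residue class
lemma telescope (hx : ∀ i, 1 ≤ i → ∀ j, 0 < x i j) {r : ℕ} (hk : 0 < k) (hr : r < k)
    {T : ℕ} (hT : 1 ≤ T) :
    ∏ t ∈ Finset.range T,
        dot (kPUP k (uniformSimplex (m'+1)) x (k * t + r + 1)) (x (k * t + r + 1))
      = dot (fun _ => ((m'+1 : ℕ) : ℝ)⁻¹) (x (r + 1)) * (Ffun k x r T / Ffun k x r 1) := by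
  induction T, hT using Nat.le_induction with
  | base =>
      rw [Finset.prod_range_one, div_self (Ffun_pos hx r 1).ne', mul_one, kPUP_zero hk hr]
      norm_num
  | succ T hT ih =>
      rw [Finset.prod_range_succ, ih, kPUP_succ_dot hx hk hr (by omega)]
      have h1 := (Ffun_pos (k := k) (x := x) hx r 1).ne'
      have hT' := (Ffun_pos (k := k) (x := x) hx r T).ne'
      field_simp

lemma Ffun_one_le (hx : ∀ i, 1 ≤ i → ∀ j, 0 < x i j) (r : ℕ) :
    Ffun k x r 1 ≤ ((m'+1 : ℕ) : ℝ) * dot (fun _ => ((m'+1 : ℕ) : ℝ)⁻¹) (x (r + 1)) := by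
  have hrw : ((m'+1 : ℕ) : ℝ) * dot (fun _ => ((m'+1 : ℕ) : ℝ)⁻¹) (x (r + 1))
      = ∑ j, x (r+1) j := by
    rw [dot_unif, ← mul_assoc, mul_inv_cancel₀ (by positivity), one_mul]
  rw [hrw]
  refine setIntegral_simplex_le (Pfun_continuous r 1) ?_
  intro b hb
  have : Pfun k x r 1 b = dot b (x (0 + r + 1)) := by
    simp [Pfun, Finset.prod_range_one]
  rw [this]
  simpa using dot_le_sum hb (fun j => (hx (0+r+1) (by omega) j).le)

end Core

section Cover

variable {m' : ℕ} {k : ℕ} {x : ℕ → Fin (m'+1) → ℝ}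

lemma homothety_eq (α : ℝ) (b₀ b : Fin (m'+1) → ℝ) :
    AffineMap.homothety b₀ α b = α • b + (1 - α) • b₀ := by
  simp [AffineMap.homothety_apply, vsub_eq_sub, vadd_eq_add, smul_sub]
  module

lemma homothety_image_subset {α : ℝ} (hα : 0 ≤ α) (hα1 : α ≤ 1) {b₀ : Fin (m'+1) → ℝ}
    (hb₀ : b₀ ∈ simplex (m'+1)) :
    AffineMap.homothety b₀ α '' simplex (m'+1) ⊆ simplex (m'+1) := by
  rintro _ ⟨b, hb, rfl⟩
  rw [homothety_eq]
  exact (convex_stdSimplex ℝ (Fin (m'+1))) hb hb₀ hα (by linarith) (by ring)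

lemma cover_bound (hx : ∀ i, 1 ≤ i → ∀ j, 0 < x i j) (r T : ℕ)
    {bs : Fin (m'+1) → ℝ} (hb : bs ∈ simplex (m'+1)) {α : ℝ} (hα : 0 < α) (hα1 : α ≤ 1) :
    (1 - α) ^ T * α ^ (((m'+1 : ℕ) : ℝ) - 1) * Pfun k x r T bs ≤ Ffun k x r T := by
  set ν := uniformSimplex (m'+1)
  set A := AffineMap.homothety bs α '' simplex (m'+1) with hA
  have hsub : A ⊆ simplex (m'+1) := homothety_image_subset hα.le hα1 hb
  have hcont : Continuous (AffineMap.homothety bs α) := by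
    have : (AffineMap.homothety bs α : (Fin (m'+1) → ℝ) → (Fin (m'+1) → ℝ))
        = fun b => α • b + (1 - α) • bs := funext fun b => homothety_eq α bs b
    rw [this]
    fun_prop
  have hAmeas : MeasurableSet A :=
    ((simplex_isCompact (m'+1)).image hcont).measurableSet
  have hνA : ν A = ENNReal.ofReal (α ^ (((m'+1 : ℕ) : ℝ) - 1)) := uS_homothety m' hα hα1 hb
  -- pointwise lower bound on A
  have hlow : ∀ a ∈ A, (1 - α) ^ T * Pfun k x r T bs ≤ Pfun k x r T a := by
    rintro _ ⟨b, hbmem, rfl⟩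
    rw [homothety_eq]
    unfold Pfun
    rw [show (1 - α) ^ T = ∏ _s ∈ Finset.range T, (1 - α) by
          rw [Finset.prod_const, Finset.card_range],
        ← Finset.prod_mul_distrib]
    refine Finset.prod_le_prod (fun s _ => ?nonneg) (fun s _ => ?le)
    case nonneg =>
      exact mul_nonneg (by linarith) (dot_pos hb fun j => hx _ (by omega) j).le
    case le =>
      rw [dot_combo]
      have h1 : 0 ≤ α * dot b (x (k * s + r + 1)) :=
        mul_nonneg hα.le (dot_pos hbmem fun j => hx _ (by omega) j).le
      linarith
  -- lower bound on the integral over A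
  have h2 : ((1 - α) ^ T * Pfun k x r T bs) * (ν A).toReal
      ≤ ∫ b in A, Pfun k x r T b ∂ν :=
    by have := setIntegral_ge_of_const_le hAmeas (by rw [hνA]; exact ENNReal.ofReal_ne_top) hlow
        ((integrableOn_simplex (Pfun_continuous r T)).mono_set hsub)
       rw [measureReal_def, smul_eq_mul] at this; linarith
  have h3 : (ν A).toReal = α ^ (((m'+1 : ℕ) : ℝ) - 1) := by
    rw [hνA, ENNReal.toReal_ofReal (Real.rpow_nonneg hα.le _)]
  have h4 : ∫ b in A, Pfun k x r T b ∂ν ≤ ∫ b in simplex (m'+1), Pfun k x r T b ∂ν := by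
    refine setIntegral_mono_set (integrableOn_simplex (Pfun_continuous r T)) ?_
      (HasSubset.Subset.eventuallyLE hsub)
    filter_upwards [ae_restrict_mem (simplex_measurableSet (m'+1))] with b hbmem
    exact (Pfun_pos hx r T hbmem).le
  rw [h3] at h2
  calc (1 - α) ^ T * α ^ (((m'+1 : ℕ) : ℝ) - 1) * Pfun k x r T bs
      = ((1 - α) ^ T * Pfun k x r T bs) * α ^ (((m'+1 : ℕ) : ℝ) - 1) := by ring
    _ ≤ ∫ b in A, Pfun k x r T b ∂ν := h2
    _ ≤ Ffun k x r T := h4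

end Cover

section Main

variable {m' : ℕ} {k : ℕ} {x : ℕ → Fin (m'+1) → ℝ}

lemma prod_Icc_one (f : ℕ → ℝ) (n : ℕ) :
    ∏ i ∈ Finset.Icc 1 n, f i = ∏ i ∈ Finset.range n, f (i + 1) := by
  have h : Finset.Icc 1 n = Finset.Ico 1 (n+1) := by
    ext i; simp [Nat.lt_succ_iff]
  rw [h, Finset.prod_Ico_eq_prod_range]
  simp only [Nat.add_sub_cancel]
  exact Finset.prod_congr rfl fun i _ => by rw [Nat.add_comm]

lemma alg_dot_pos (hx : ∀ i, 1 ≤ i → ∀ j, 0 < x i j) (hk : 0 < k) {i : ℕ} (hi : 1 ≤ i) :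
    0 < dot (kPUP k (uniformSimplex (m'+1)) x i) (x i) := by
  have hdecomp : i = k * ((i - 1) / k) + (i - 1) % k + 1 := by
    have := Nat.div_add_mod (i - 1) k
    omega
  have hr : (i - 1) % k < k := Nat.mod_lt _ hk
  rcases Nat.eq_zero_or_pos ((i - 1) / k) with ht | ht
  · rw [hdecomp, ht, kPUP_zero hk hr]
    exact dot_pos (unif_mem (m'+1) (by omega)) fun j => hx _ (by omega) j
  · rw [hdecomp, kPUP_succ_dot hx hk hr (by omega)]
    exact div_pos (Ffun_pos hx _ _) (Ffun_pos hx _ _)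

lemma main_ineq (hx : ∀ i, 1 ≤ i → ∀ j, 0 < x i j) (hk : 0 < k) {n : ℕ} (hn : k ≤ n)
    {bs : Fin (m'+1) → ℝ} (hb : bs ∈ simplex (m'+1)) {α : ℝ} (hα : 0 < α) (hα1 : α ≤ 1) :
    (∏ i ∈ Finset.Icc 1 n, dot bs (x i))
        * ((1 - α) ^ n * (α ^ (((m'+1 : ℕ) : ℝ) - 1)) ^ k)
      ≤ ((m'+1 : ℕ) : ℝ) ^ k
        * ∏ i ∈ Finset.Icc 1 n, dot (kPUP k (uniformSimplex (m'+1)) x i) (x i) := by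
  set M : ℝ := ((m'+1 : ℕ) : ℝ) with hM
  set A : ℝ := α ^ (((m'+1 : ℕ) : ℝ) - 1) with hA
  have hApos : 0 < A := Real.rpow_pos_of_pos hα _
  set T : ℕ → ℕ := fun r => (n + k - 1 - r) / k with hT
  have hT1 : ∀ r < k, 1 ≤ T r := by
    intro r hr
    exact (lt_count_iff (t := 0) (N := n) hk hr).mpr (by omega)
  have hsumT : ∑ r ∈ Finset.range k, T r = n := by
    have := sum_range_mod (M := ℕ) hk (fun _ => 1) n
    simpa using this.symm
  -- decompose the algorithm's wealth
  have hSalg : ∏ i ∈ Finset.Icc 1 n, dot (kPUP k (uniformSimplex (m'+1)) x i) (x i)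
      = ∏ r ∈ Finset.range k,
          (dot (fun _ => M⁻¹) (x (r + 1)) * (Ffun k x r (T r) / Ffun k x r 1)) := by
    rw [prod_Icc_one, prod_range_mod hk]
    refine Finset.prod_congr rfl fun r hr => ?_
    rw [← telescope hx hk (Finset.mem_range.mp hr) (hT1 r (Finset.mem_range.mp hr))]
  have hSb : ∏ i ∈ Finset.Icc 1 n, dot bs (x i)
      = ∏ r ∈ Finset.range k, Pfun k x r (T r) bs := by
    rw [prod_Icc_one, prod_range_mod hk]
    rfl
  -- step 1 : m^k * Salg ≥ ∏ F r (T r)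
  have step1 : ∏ r ∈ Finset.range k, Ffun k x r (T r)
      ≤ M ^ k * ∏ i ∈ Finset.Icc 1 n, dot (kPUP k (uniformSimplex (m'+1)) x i) (x i) := by
    rw [hSalg, show M ^ k = ∏ _r ∈ Finset.range k, M by
          rw [Finset.prod_const, Finset.card_range],
        ← Finset.prod_mul_distrib]
    refine Finset.prod_le_prod (fun r _ => (Ffun_pos hx _ _).le) (fun r hr => ?_)
    have h1 := Ffun_one_le (k := k) hx r
    have h2 : (0:ℝ) < Ffun k x r 1 := Ffun_pos hx r 1
    have h3 : (0:ℝ) < Ffun k x r (T r) := Ffun_pos hx r (T r)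
    rw [show M * (dot (fun _ => M⁻¹) (x (r + 1)) * (Ffun k x r (T r) / Ffun k x r 1))
          = (M * dot (fun _ => M⁻¹) (x (r + 1))) * Ffun k x r (T r) / Ffun k x r 1 from by ring,
        le_div_iff₀ h2]
    nlinarith [mul_nonneg (sub_nonneg.mpr h1) h3.le]
  -- step 2 : ∏ F r (T r) ≥ (1-α)^n * A^k * Sb
  have step2 : (∏ r ∈ Finset.range k, Pfun k x r (T r) bs) * ((1 - α) ^ n * A ^ k)
      ≤ ∏ r ∈ Finset.range k, Ffun k x r (T r) := by
    have heq : (∏ r ∈ Finset.range k, Pfun k x r (T r) bs) * ((1 - α) ^ n * A ^ k)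
        = ∏ r ∈ Finset.range k, ((1 - α) ^ (T r) * A * Pfun k x r (T r) bs) := by
      rw [Finset.prod_mul_distrib, Finset.prod_mul_distrib, Finset.prod_pow_eq_pow_sum,
        hsumT, Finset.prod_const, Finset.card_range]
      ring
    rw [heq]
    refine Finset.prod_le_prod (fun r _ => ?_) (fun r _ => cover_bound hx r (T r) hb hα hα1)
    have := Pfun_pos (k := k) hx r (T r) hb
    have h1α : (0:ℝ) ≤ 1 - α := by linarith
    positivity
  rw [hSb]
  exact le_trans step2 step1

end Main

-- the vanishing bound sequence
lemma tendsto_logbound (C D : ℝ) :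
    Tendsto (fun n : ℕ => (n : ℝ)⁻¹ * (C + D * Real.log ((n : ℝ) + 1))) atTop (nhds 0) := by
  have h1 : Tendsto (fun n : ℕ => C * (n : ℝ)⁻¹) atTop (nhds 0) := by
    simpa using (tendsto_inv_atTop_nhds_zero_nat (𝕜 := ℝ)).const_mul C
  have hlo : (fun n : ℕ => Real.log ((n : ℝ) + 1)) =o[atTop] (fun n : ℕ => (n : ℝ)) := by
    have hcomp : (fun n : ℕ => Real.log ((n : ℝ) + 1)) =o[atTop] (fun n : ℕ => (n : ℝ) + 1) := by
      refine Asymptotics.IsLittleO.comp_tendsto Real.isLittleO_log_id_atTop ?_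
      exact tendsto_atTop_add_const_right _ 1 tendsto_natCast_atTop_atTop
    refine hcomp.trans_isBigO (Asymptotics.IsBigO.of_bound 2 ?_)
    filter_upwards [eventually_ge_atTop 1] with n hn
    have h1n : (1 : ℝ) ≤ (n : ℝ) := by exact_mod_cast hn
    rw [Real.norm_eq_abs, Real.norm_eq_abs, abs_of_nonneg (by linarith), abs_of_nonneg (by linarith)]
    linarith
  have h2 : Tendsto (fun n : ℕ => D * (Real.log ((n : ℝ) + 1) / (n : ℝ))) atTop (nhds 0) := by
    simpa using (hlo.tendsto_div_nhds_zero).const_mul D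
  have h3 := h1.add h2
  rw [add_zero] at h3
  refine h3.congr fun n => ?_
  rw [div_eq_mul_inv]
  ring


/-- For the `k`-parallel Universal Portfolio strategy with the uniform density
on the simplex, `k ≥ 2`, and every infinite sequence of return vectors with positive entries,
`limsup_{n → ∞} max_{b ∈ B^m} (W_n(b) - W_n(b_n)) ≤ 0`. -/
theorem kPUP_consistency_constant
    (m : ℕ) (hm : 2 ≤ m) (k : ℕ) (hk : 2 ≤ k)
    (x : ℕ → Fin m → ℝ) (hx : ∀ i, 1 ≤ i → ∀ j, 0 < x i j) :
    Filter.limsup (fun n : ℕ =>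
      sSup {w : ℝ | ∃ b ∈ simplex m,
        w = (n : ℝ)⁻¹ * Real.log (∏ i ∈ Finset.Icc 1 n, dot b (x i)) -
            (n : ℝ)⁻¹ * Real.log (∏ i ∈ Finset.Icc 1 n, dot (kPUP k (uniformSimplex m) x i) (x i))})
      Filter.atTop ≤ 0 := by
  obtain ⟨m', rfl⟩ : ∃ m', m = m' + 1 := ⟨m - 1, by omega⟩
  have hk0 : 0 < k := by omega
  set d : ℝ := ((m' + 1 : ℕ) : ℝ) - 1 with hd
  have hd0 : 0 ≤ d := by rw [hd]; push_cast; linarith [Nat.cast_nonneg (α := ℝ) m']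
  set M : ℝ := ((m' + 1 : ℕ) : ℝ) with hM
  have hM1 : 1 ≤ M := by rw [hM]; exact_mod_cast Nat.one_le_iff_ne_zero.mpr (by omega)
  set C : ℝ := k * Real.log M + 1 with hC
  set g : ℕ → ℝ := fun n => (n : ℝ)⁻¹ * (C + (k * d) * Real.log ((n : ℝ) + 1)) with hg
  set u : ℕ → ℝ := fun n : ℕ =>
      sSup {w : ℝ | ∃ b ∈ simplex (m' + 1),
        w = (n : ℝ)⁻¹ * Real.log (∏ i ∈ Finset.Icc 1 n, dot b (x i)) -
            (n : ℝ)⁻¹ * Real.log (∏ i ∈ Finset.Icc 1 n,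
              dot (kPUP k (uniformSimplex (m' + 1)) x i) (x i))} with hu
  have hgpos : ∀ n : ℕ, 0 ≤ g n := by
    intro n
    have hlog1 : (0:ℝ) ≤ Real.log M := Real.log_nonneg hM1
    have hlog2 : (0:ℝ) ≤ Real.log ((n : ℝ) + 1) :=
      Real.log_nonneg (by linarith [Nat.cast_nonneg (α := ℝ) n])
    rw [hg]
    have hC0 : (0:ℝ) ≤ C := by rw [hC]; positivity
    have hkd : (0:ℝ) ≤ (k : ℝ) * d := by positivity
    exact mul_nonneg (by positivity) (add_nonneg hC0 (mul_nonneg hkd hlog2))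
  -- eventual bound u ≤ g
  have hev : ∀ᶠ n in atTop, u n ≤ g n := by
    filter_upwards [eventually_ge_atTop k] with n hn
    have hn1 : 1 ≤ n := by omega
    have hnR : (0:ℝ) < (n : ℝ) := by exact_mod_cast (by omega : 0 < n)
    refine Real.sSup_le ?_ (hgpos n)
    rintro w ⟨bs, hbmem, rfl⟩
    -- choose α = 1/(n+1)
    set α : ℝ := ((n : ℝ) + 1)⁻¹ with hα'
    have hα : 0 < α := by positivity
    have hα1 : α ≤ 1 := by
      rw [hα']
      rw [inv_le_one_iff₀]
      right; linarith
    have h1α : 0 < 1 - α := by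
      rw [hα']
      have : ((n:ℝ)+1)⁻¹ < 1 := by
        rw [inv_lt_one_iff₀]; right; linarith
      linarith
    have hmain := main_ineq hx hk0 hn hbmem hα hα1
    set A : ℝ := α ^ d with hA
    have hApos : 0 < A := Real.rpow_pos_of_pos hα _
    have hSb : 0 < ∏ i ∈ Finset.Icc 1 n, dot bs (x i) :=
      Finset.prod_pos fun i hi =>
        dot_pos hbmem fun j => hx i (Finset.mem_Icc.mp hi).1 j
    have hSalg : 0 < ∏ i ∈ Finset.Icc 1 n,
        dot (kPUP k (uniformSimplex (m' + 1)) x i) (x i) :=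
      Finset.prod_pos fun i hi => alg_dot_pos hx hk0 (Finset.mem_Icc.mp hi).1
    have hlhs : 0 < (∏ i ∈ Finset.Icc 1 n, dot bs (x i)) * ((1 - α) ^ n * A ^ k) := by
      positivity
    have hlog := Real.log_le_log hlhs hmain
    rw [Real.log_mul hSb.ne' (by positivity), Real.log_mul (by positivity) (by positivity),
      Real.log_mul (by positivity) hSalg.ne', Real.log_pow, Real.log_pow, Real.log_pow] at hlog
    have hlogA : Real.log A = -(d * Real.log ((n : ℝ) + 1)) := by
      rw [hA, Real.log_rpow hα, hα', Real.log_inv]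
      ring
    have hlog1α : -((n : ℝ) * Real.log (1 - α)) ≤ 1 := by
      have h1 : (1 - α)⁻¹ = 1 + (n:ℝ)⁻¹ := by
        rw [hα']
        field_simp
        rw [add_sub_cancel_right, div_self hnR.ne']
      have h2 : Real.log (1 + (n:ℝ)⁻¹) ≤ (n:ℝ)⁻¹ := by
        have := Real.log_le_sub_one_of_pos (x := 1 + (n:ℝ)⁻¹) (by positivity)
        linarith
      have h3 : -Real.log (1 - α) = Real.log (1 + (n:ℝ)⁻¹) := by
        rw [← h1, Real.log_inv]
      have h4 : -((n : ℝ) * Real.log (1 - α)) = (n:ℝ) * Real.log (1 + (n:ℝ)⁻¹) := by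
        rw [← h3]; ring
      rw [h4]
      calc (n:ℝ) * Real.log (1 + (n:ℝ)⁻¹) ≤ (n:ℝ) * (n:ℝ)⁻¹ := by
            exact mul_le_mul_of_nonneg_left h2 hnR.le
        _ = 1 := mul_inv_cancel₀ hnR.ne'
    -- assemble
    have hdiff : Real.log (∏ i ∈ Finset.Icc 1 n, dot bs (x i))
        - Real.log (∏ i ∈ Finset.Icc 1 n,
            dot (kPUP k (uniformSimplex (m' + 1)) x i) (x i))
        ≤ C + (k * d) * Real.log ((n : ℝ) + 1) := by
      have hkA : (k : ℝ) * Real.log A = -((k : ℝ) * d * Real.log ((n : ℝ) + 1)) := by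
        rw [hlogA]; ring
      rw [hC]
      have := hlog
      rw [hkA] at this
      have hMlog : (k : ℝ) * Real.log M = k * Real.log M := rfl
      nlinarith [hlog1α]
    rw [← mul_sub]
    calc (n : ℝ)⁻¹ * (Real.log (∏ i ∈ Finset.Icc 1 n, dot bs (x i))
          - Real.log (∏ i ∈ Finset.Icc 1 n,
              dot (kPUP k (uniformSimplex (m' + 1)) x i) (x i)))
        ≤ (n : ℝ)⁻¹ * (C + (k * d) * Real.log ((n : ℝ) + 1)) := by
          exact mul_le_mul_of_nonneg_left hdiff (by positivity)
      _ = g n := by rw [hg]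
  -- conclude via the characterization of limsup
  have htend : Tendsto g atTop (nhds 0) := by
    rw [hg]
    exact tendsto_logbound C (k * d)
  rw [Filter.limsup_eq]
  by_cases hbd : BddBelow {a : ℝ | ∀ᶠ n in atTop, u n ≤ a}
  · refine le_of_forall_pos_le_add fun ε hε => ?_
    rw [zero_add]
    refine csInf_le hbd ?_
    have hge := htend.eventually (gt_mem_nhds hε)
    filter_upwards [hev, hge] with n h1 h2
    exact h1.trans h2.le
  · rw [Real.sInf_of_not_bddBelow hbd]
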